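/- arXiv:2109.06458 — 3 statements merged into one kernel-verified Lean document; each statement's English description precedes it below -/
import Mathlib

section
/- High-temperature limit of the KD gradient: as T → ∞, T²·∂L_KD/∂z^s_i = T·(p^s_i(T) − p^t_i(T)) converges, namely lim_{T→∞} T·(p^s_i(T) − p^t_i(T)) = (1/K)(z^s_i − z^t_i) − (1/K²)(Σ_j z^s_j − Σ_j z^t_j). -/
open Filter

noncomputable def softmax (K : ℕ) (T : ℝ) (z : Fin K → ℝ) (i : Fin K) : ℝ :=
  Real.exp (z i / T) / ∑ j, Real.exp (z j / T)

lemma softmaxU_hasDerivAt (K : ℕ) (hK : 1 ≤ K) (z : Fin K → ℝ) (i : Fin K) :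
    HasDerivAt (fun u : ℝ => Real.exp (z i * u) / ∑ j, Real.exp (z j * u))
      ((z i * K - ∑ j, z j) / (K : ℝ) ^ 2) 0 := by
  have hKpos : (0 : ℝ) < K := by exact_mod_cast hK
  have hN : HasDerivAt (fun u : ℝ => Real.exp (z i * u)) (z i) 0 := by
    have := ((hasDerivAt_id (0 : ℝ)).const_mul (z i)).exp
    simpa using this
  have hD : HasDerivAt (fun u : ℝ => ∑ j, Real.exp (z j * u)) (∑ j, z j) 0 := by
    apply HasDerivAt.fun_sum
    intro j _
    have := ((hasDerivAt_id (0 : ℝ)).const_mul (z j)).exp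
    simpa using this
  have hD0 : (∑ j, Real.exp (z j * 0)) = (K : ℝ) := by simp
  have hDne : (∑ j, Real.exp (z j * 0)) ≠ 0 := by rw [hD0]; positivity
  have := hN.fun_div hD hDne
  simpa [hD0] using this

/-- High-temperature limit of the KD gradient:
    `T·(pˢ_i(T) − pᵗ_i(T)) → (1/K)(zˢ_i − zᵗ_i) − (1/K²)(∑ zˢ − ∑ zᵗ)` as `T → ∞`. -/
theorem kd_grad_high_temp_limit (K : ℕ) (hK : 1 ≤ K) (zt zs : Fin K → ℝ) (i : Fin K) :
    Tendsto (fun T : ℝ => T * (softmax K T zs i - softmax K T zt i)) atTop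
      (nhds ((1 / (K : ℝ)) * (zs i - zt i)
        - (1 / (K : ℝ) ^ 2) * ((∑ j, zs j) - ∑ j, zt j))) := by
  have hKpos : (0 : ℝ) < K := by exact_mod_cast hK
  set G : ℝ → ℝ := fun u =>
    Real.exp (zs i * u) / ∑ j, Real.exp (zs j * u)
      - Real.exp (zt i * u) / ∑ j, Real.exp (zt j * u) with hG
  have hder : HasDerivAt G
      ((zs i * K - ∑ j, zs j) / (K : ℝ) ^ 2 - (zt i * K - ∑ j, zt j) / (K : ℝ) ^ 2) 0 :=
    (softmaxU_hasDerivAt K hK zs i).sub (softmaxU_hasDerivAt K hK zt i)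
  have hG0 : G 0 = 0 := by simp [hG]
  have hslope := hasDerivAt_iff_tendsto_slope.mp hder
  have hinv : Tendsto (fun T : ℝ => T⁻¹) atTop (nhdsWithin (0 : ℝ) {x | x ≠ 0}) := by
    rw [tendsto_nhdsWithin_iff]
    refine ⟨tendsto_inv_atTop_zero, ?_⟩
    filter_upwards [eventually_gt_atTop (0 : ℝ)] with T hT
    exact inv_ne_zero hT.ne'
  have hcomp := hslope.comp hinv
  have heq : (fun T : ℝ => T * (softmax K T zs i - softmax K T zt i))
      =ᶠ[atTop] (fun T : ℝ => slope G 0 (T⁻¹)) := by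
    filter_upwards [eventually_gt_atTop (0 : ℝ)] with T hT
    have hTne : T ≠ 0 := hT.ne'
    simp only [slope_def_field, hG0, sub_zero]
    rw [div_eq_mul_inv, inv_inv]
    simp only [softmax, hG]
    have h1 : ∀ a : ℝ, a / T = a * T⁻¹ := fun a => div_eq_mul_inv a T
    rw [mul_comm]
    congr 1 <;> simp [h1]
  have hfinal : ((zs i * K - ∑ j, zs j) / (K : ℝ) ^ 2 - (zt i * K - ∑ j, zt j) / (K : ℝ) ^ 2)
      = ((1 / (K : ℝ)) * (zs i - zt i) - (1 / (K : ℝ) ^ 2) * ((∑ j, zs j) - ∑ j, zt j)) := by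
    field_simp
    ring
  rw [← hfinal]
  exact Tendsto.congr' heq.symm hcomp
end

section
/- If the logits have equal means, i.e. Σ_j z^s_j = Σ_j z^t_j, then the high-temperature limit of the KD gradient equals the logits-matching gradient: lim_{T→∞} T·(p^s_i(T) − p^t_i(T)) = (z^s_i − z^t_i)/K. -/
open Filter

open Topology

/-!
In the variable `ε = 1/T` the softmax is differentiable at `ε = 0`, where it equals `1/K`
whatever the logits, and its derivative there is `(z_i - z̄)/K`. Hence `T (p^s_i(T) - p^t_i(T))`
is a difference quotient at `ε = 0` and tends to `(z^s_i - z̄^s)/K - (z^t_i - z̄^t)/K`; the two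
means cancel when the logit sums agree.
-/

theorem HasDerivAt.tendsto_smul_sub_inv_atTop {E : Type*} [NormedAddCommGroup E]
    [NormedSpace ℝ E] {f : ℝ → E} {f' : E} (hf : HasDerivAt f f' 0) :
    Tendsto (fun T : ℝ => T • (f T⁻¹ - f 0)) atTop (𝓝 f') := by
  have := hf.tendsto_slope_zero_right.comp tendsto_inv_atTop_nhdsGT_zero
  simpa only [Function.comp_def, zero_add, inv_inv] using this

theorem hasDerivAt_exp_const_mul (c x : ℝ) :
    HasDerivAt (fun ε => Real.exp (c * ε)) (c * Real.exp (c * x)) x := by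
  simpa [mul_comm] using ((hasDerivAt_id x).const_mul c).exp

theorem hasDerivAt_softmax_inv {K : ℕ} (z : Fin K → ℝ) (i : Fin K) :
    HasDerivAt (fun ε => softmax K ε⁻¹ z i) ((z i - (∑ j, z j) / K) / K) 0 := by
  have hK : (K : ℝ) ≠ 0 := Nat.cast_ne_zero.mpr (Fin.pos i).ne'
  -- also at `ε = 0`, because `0⁻¹ = 0` and `x / 0 = 0`
  have hfun : (fun ε => softmax K ε⁻¹ z i) =
      fun ε => Real.exp (z i * ε) / ∑ j, Real.exp (z j * ε) := by
    funext ε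
    simp only [softmax, div_inv_eq_mul, mul_comm]
  have hden : HasDerivAt (fun ε => ∑ j, Real.exp (z j * ε)) (∑ j, z j * Real.exp (z j * 0)) 0 :=
    HasDerivAt.fun_sum fun j _ => hasDerivAt_exp_const_mul (z j) 0
  rw [hfun]
  refine ((hasDerivAt_exp_const_mul (z i) 0).fun_div hden (by simp [hK])).congr_deriv ?_
  simp only [mul_zero, Real.exp_zero, Finset.sum_const, Finset.card_univ, Fintype.card_fin,
    nsmul_eq_mul, mul_one, one_mul]
  field_simp

theorem kd_grad_limit_equal_mean_general (K : ℕ) (zt zs : Fin K → ℝ)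
    (hmean : ∑ j, zs j = ∑ j, zt j) (i : Fin K) :
    Tendsto (fun T : ℝ => T * (softmax K T zs i - softmax K T zt i)) atTop
      (nhds ((zs i - zt i) / (K : ℝ))) := by
  have hlim := ((hasDerivAt_softmax_inv zs i).fun_sub
    (hasDerivAt_softmax_inv zt i)).tendsto_smul_sub_inv_atTop
  have hderiv : (zs i - (∑ j, zs j) / K) / K - (zt i - (∑ j, zt j) / K) / K
      = (zs i - zt i) / K := by
    rw [hmean]; ring
  have hat_zero : softmax K 0 zs i = softmax K 0 zt i := by
    simp [softmax]
  rw [hderiv] at hlim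
  simpa only [inv_inv, inv_zero, hat_zero, sub_self, sub_zero, smul_eq_mul] using hlim

/-- With equal-mean logits, the high-temperature limit of the KD gradient is the
    logits-matching gradient `(zˢ_i − zᵗ_i)/K`. -/
theorem kd_grad_limit_equal_mean (K : ℕ) (hK : 1 ≤ K) (zt zs : Fin K → ℝ)
    (hmean : ∑ j, zs j = ∑ j, zt j) (i : Fin K) :
    Tendsto (fun T : ℝ => T * (softmax K T zs i - softmax K T zt i)) atTop
      (nhds ((zs i - zt i) / (K : ℝ))) :=
  kd_grad_limit_equal_mean_general K zt zs hmean i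
end

section
/- The gradients of T²·L_KD and of L_LM agree in the high-temperature limit when evaluated at equal-mean logits: for all i, lim_{T→∞} ∂(T²L_KD)/∂z^s_i exists and equals ∂L_LM/∂z^s_i, given Σ_j z^s_j = Σ_j z^t_j. -/
/-!
Since `exp (c / T) = 1 + c / T + o(1 / T)`, at high temperature
`softmax K T z i = 1 / K + (z i - mean z) / (K T) + o(1 / T)`. In `T (pˢ_i - pᵗ_i)` the constant
terms cancel, and so do the means when the logits have equal sums, leaving `(zˢ_i - zᵗ_i) / K`,
which is also the `i`-th partial derivative of the quadratic logit-matching loss.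
-/

open Filter

open Topology

theorem Real.tendsto_mul_exp_div_sub_one (c : ℝ) :
    Tendsto (fun T : ℝ => T * (Real.exp (c / T) - 1)) atTop (𝓝 c) := by
  have hderiv : HasDerivAt (fun t => Real.exp (c * t)) c 0 := by
    simpa using ((hasDerivAt_id (0 : ℝ)).const_mul c).exp
  have hinv : Tendsto (fun T : ℝ => T⁻¹) atTop (𝓝[≠] 0) :=
    tendsto_inv_atTop_nhdsGT_zero.mono_right (nhdsWithin_mono _ fun _ hx => ne_of_gt hx)
  refine ((hasDerivAt_iff_tendsto_slope.mp hderiv).comp hinv).congr' ?_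
  filter_upwards [eventually_ne_atTop 0] with T hT
  simp [slope_def_field, div_eq_mul_inv, mul_comm]

theorem Real.tendsto_mul_exp_div_sub_exp_div (a b : ℝ) :
    Tendsto (fun T : ℝ => T * (Real.exp (a / T) - Real.exp (b / T))) atTop (𝓝 (a - b)) :=
  ((Real.tendsto_mul_exp_div_sub_one a).sub (Real.tendsto_mul_exp_div_sub_one b)).congr
    fun T => by ring

theorem Real.tendsto_exp_div_atTop (c : ℝ) :
    Tendsto (fun T : ℝ => Real.exp (c / T)) atTop (𝓝 1) := by
  simpa [Function.comp_def] using
    (Real.continuous_exp.tendsto 0).comp (tendsto_const_nhds.div_atTop tendsto_id)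

theorem softmax_sub_inv_card {K : ℕ} (T : ℝ) (z : Fin K → ℝ) (i : Fin K) :
    softmax K T z i - 1 / K
      = (∑ j, (Real.exp (z i / T) - Real.exp (z j / T))) / (K * ∑ j, Real.exp (z j / T)) := by
  have hK : (K : ℝ) ≠ 0 := Nat.cast_ne_zero.mpr i.pos.ne'
  have hS : ∑ j, Real.exp (z j / T) ≠ 0 :=
    (Finset.sum_pos (fun j _ => Real.exp_pos _) ⟨i, Finset.mem_univ i⟩).ne'
  rw [softmax, Finset.sum_sub_distrib, Finset.sum_const, Finset.card_univ, Fintype.card_fin,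
    nsmul_eq_mul]
  field_simp

theorem tendsto_mul_softmax_sub_inv_card {K : ℕ} (z : Fin K → ℝ) (i : Fin K) :
    Tendsto (fun T : ℝ => T * (softmax K T z i - 1 / K)) atTop
      (𝓝 ((K * z i - ∑ j, z j) / (K * K))) := by
  have hK : (K : ℝ) ≠ 0 := Nat.cast_ne_zero.mpr i.pos.ne'
  have hnum : Tendsto (fun T : ℝ => ∑ j, T * (Real.exp (z i / T) - Real.exp (z j / T))) atTop
      (𝓝 (K * z i - ∑ j, z j)) := by
    convert tendsto_finsetSum Finset.univ
      fun j _ => Real.tendsto_mul_exp_div_sub_exp_div (z i) (z j)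
    simp [Finset.sum_sub_distrib]
  have hden : Tendsto (fun T : ℝ => K * ∑ j, Real.exp (z j / T)) atTop (𝓝 (K * K)) := by
    convert (tendsto_finsetSum Finset.univ fun j _ => Real.tendsto_exp_div_atTop (z j)).const_mul
      (K : ℝ)
    simp
  refine (hnum.div hden (mul_ne_zero hK hK)).congr fun T => ?_
  rw [Pi.div_apply, softmax_sub_inv_card, mul_div_assoc', Finset.mul_sum _ _ T]

theorem hasDerivAt_sum_sub_update_sq {ι : Type*} [Fintype ι] [DecidableEq ι]
    (a b : ι → ℝ) (i : ι) (x : ℝ) :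
    HasDerivAt (fun y => ∑ k, (a k - Function.update b i y k) ^ 2) (2 * (x - a i)) x := by
  have hsplit : ∀ y, ∑ k, (a k - Function.update b i y k) ^ 2
      = (a i - y) ^ 2 + ∑ k ∈ Finset.univ.erase i, (a k - b k) ^ 2 := fun y => by
    rw [← Finset.add_sum_erase _ _ (Finset.mem_univ i), Function.update_self]
    congr 1
    exact Finset.sum_congr rfl fun k hk => by rw [Function.update_of_ne (Finset.ne_of_mem_erase hk)]
  simp only [hsplit]
  exact ((((hasDerivAt_id x).const_sub (a i)).pow 2).add_const _).congr_deriv <| by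
    simp only [Nat.cast_ofNat, id_eq, Nat.add_one_sub_one, pow_one, mul_neg, mul_one]
    ring

theorem kd_eq_lm_grad_high_temp_general (K : ℕ) (zt zs : Fin K → ℝ)
    (hmean : ∑ j, zs j = ∑ j, zt j) (i : Fin K) :
    Tendsto (fun T : ℝ => T * (softmax K T zs i - softmax K T zt i)) atTop
      (nhds ((zs i - zt i) / (K : ℝ)))
    ∧
    HasDerivAt
      (fun x : ℝ => (1 / (2 * (K : ℝ))) * ∑ k, (zt k - Function.update zs i x k) ^ 2)
      ((zs i - zt i) / (K : ℝ)) (zs i) := by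
  have hK : (K : ℝ) ≠ 0 := Nat.cast_ne_zero.mpr i.pos.ne'
  constructor
  · convert (tendsto_mul_softmax_sub_inv_card zs i).sub (tendsto_mul_softmax_sub_inv_card zt i)
      using 2
    · ring
    · rw [hmean]
      field_simp
      ring
  · exact ((hasDerivAt_sum_sub_update_sq zt zs i (zs i)).const_mul _).congr_deriv (by field_simp)

/-- Given equal-mean logits, for every `i` the high-temperature limit of the KD
    gradient `T(pˢ_i(T) − pᵗ_i(T))` exists and equals the logits-matching
    gradient `(zˢ_i − zᵗ_i)/K`, which is the derivative of
    `L_LM(w) = (1/(2K))∑ (zᵗ_k − w_k)²` in the `i`-th coordinate at `zs`. -/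
theorem kd_eq_lm_grad_high_temp (K : ℕ) (hK : 1 ≤ K) (zt zs : Fin K → ℝ)
    (hmean : ∑ j, zs j = ∑ j, zt j) (i : Fin K) :
    Tendsto (fun T : ℝ => T * (softmax K T zs i - softmax K T zt i)) atTop
      (nhds ((zs i - zt i) / (K : ℝ)))
    ∧
    HasDerivAt
      (fun x : ℝ => (1 / (2 * (K : ℝ))) * ∑ k, (zt k - Function.update zs i x k) ^ 2)
      ((zs i - zt i) / (K : ℝ)) (zs i) :=
  kd_eq_lm_grad_high_temp_general K zt zs hmean i
end
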